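/- arXiv:2411.04553 — 7 statements merged into one kernel-verified Lean document; each statement's English description precedes it below -/
import Mathlib

section
/- Let l ≥ 1, let ξ₁,…,ξ_l be pairwise distinct real numbers, and let α be a real number with α ≠ ξ_i for all i. For every integer p ≥ 0, one has ∑_{i=1}^{l} ξ_i^{l+p}/(Δ(ξ_i)(ξ_i − α)) = ∑_{k=0}^{p} h_{p−k}(ξ₁,…,ξ_l) α^{k} − α^{l+p}/p_nc(α). -/
open Finset

open Classical in
/-- The complete homogeneous symmetric polynomial of degree `p` in `ξ 0, …, ξ (l-1)`:
`h_p(ξ) = ∑_{1 ≤ i₁ ≤ … ≤ i_p ≤ l} ξ_{i₁} ⋯ ξ_{i_p}`, encoded as a sum over monotone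
functions `Fin p → Fin l`.  In particular `h_0 = 1`. -/
noncomputable def completeHomogeneous (l p : ℕ) (ξ : Fin l → ℝ) : ℝ :=
  ∑ f ∈ (univ : Finset (Fin p → Fin l)).filter (fun f => Monotone f), ∏ i : Fin p, ξ (f i)

lemma prod_erase_last {k : ℕ} (f : Fin (k+1) → ℝ) :
    ∏ j ∈ (univ : Finset (Fin (k+1))).erase (Fin.last k), f j = ∏ j : Fin k, f j.castSucc := by
  rw [Fin.univ_castSuccEmb, Finset.erase_cons, Finset.prod_map]
  rfl

lemma prod_erase_castSucc {k : ℕ} (f : Fin (k+1) → ℝ) (i : Fin k) :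
    ∏ j ∈ (univ : Finset (Fin (k+1))).erase (Fin.castSucc i), f j =
      (∏ j ∈ (univ : Finset (Fin k)).erase i, f j.castSucc) * f (Fin.last k) := by
  rw [Fin.univ_castSuccEmb, Finset.cons_eq_insert,
    Finset.erase_insert_of_ne (by simp [Fin.ext_iff]; omega),
    show i.castSucc = Fin.castSuccEmb i from rfl,
    ← Finset.map_erase, Finset.prod_insert (by simp [Fin.ext_iff]; omega),
    Finset.prod_map, mul_comm]
  rfl

lemma delta_ne_zero {n : ℕ} {x : Fin n → ℝ} (hx : Function.Injective x) (i : Fin n) :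
    ∏ j ∈ (univ : Finset (Fin n)).erase i, (x i - x j) ≠ 0 := by
  rw [Finset.prod_ne_zero_iff]
  intro j hj
  exact sub_ne_zero.mpr fun h => (Finset.mem_erase.mp hj).1 (hx h).symm

lemma ch_zero (l : ℕ) (ξ : Fin l → ℝ) : completeHomogeneous l 0 ξ = 1 := by
  classical
  rw [completeHomogeneous]
  have h : ∀ f ∈ (univ : Finset (Fin 0 → Fin l)), Monotone f := fun f _ a => a.elim0
  rw [Finset.filter_true_of_mem h]
  simp

lemma ch_empty (p : ℕ) (ξ : Fin 0 → ℝ) : completeHomogeneous 0 (p + 1) ξ = 0 := by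
  classical
  rw [completeHomogeneous]
  exact Finset.sum_eq_zero fun f _ => (f 0).elim0

lemma ch_one (p : ℕ) (ξ : Fin 1 → ℝ) : completeHomogeneous 1 p ξ = ξ 0 ^ p := by
  classical
  rw [completeHomogeneous]
  have h : ∀ f ∈ (univ : Finset (Fin p → Fin 1)), Monotone f :=
    fun f _ a b _ => le_of_eq (Subsingleton.elim _ _)
  rw [Finset.filter_true_of_mem h, Finset.univ_unique, Finset.sum_singleton]
  simp [Finset.prod_const, Subsingleton.elim (default : Fin p → Fin 1) (fun _ => 0)]

lemma monotone_snoc {p l : ℕ} {g : Fin p → Fin (l+1)} (hg : Monotone g) :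
    Monotone (Fin.snoc g (Fin.last l) : Fin (p+1) → Fin (l+1)) := by
  intro a b hab
  rcases Fin.eq_castSucc_or_eq_last b with ⟨b', rfl⟩ | rfl
  · rcases Fin.eq_castSucc_or_eq_last a with ⟨a', rfl⟩ | rfl
    · simpa [Fin.snoc_castSucc] using hg (Fin.castSucc_le_castSucc_iff.mp hab)
    · exact absurd hab (by simp [Fin.le_def])
  · simp only [Fin.snoc_last]
    exact Fin.le_last _

lemma ch_rec (l p : ℕ) (ξ : Fin (l+1) → ℝ) :
    completeHomogeneous (l+1) (p+1) ξ =
      completeHomogeneous l (p+1) (ξ ∘ Fin.castSucc) +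
        ξ (Fin.last l) * completeHomogeneous (l+1) p ξ := by
  classical
  rw [completeHomogeneous, completeHomogeneous, completeHomogeneous]
  rw [← Finset.sum_filter_add_sum_filter_not
    ((univ : Finset (Fin (p+1) → Fin (l+1))).filter (fun f => Monotone f))
    (fun f => f (Fin.last p) = Fin.last l)]
  rw [add_comm]
  congr 1
  · -- non-last part ↔ functions into Fin l
    refine Finset.sum_bij' (fun f hf => fun k =>
        (f k).castPred ?_) (fun g hg => Fin.castSucc ∘ g) ?_ ?_ ?_ ?_ ?_
    · -- f k ≠ last
      simp only [Finset.mem_filter, Finset.mem_univ, true_and] at hf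
      obtain ⟨hmono, hne⟩ := hf
      exact ne_of_lt (lt_of_le_of_lt (hmono (Fin.le_last k)) (Fin.lt_last_iff_ne_last.mpr hne))
    · intro f hf
      simp only [Finset.mem_filter, Finset.mem_univ, true_and] at hf ⊢
      intro a b hab
      rw [Fin.le_def]
      simpa [Fin.coe_castPred, ← Fin.le_def] using hf.1 hab
    · intro g hg
      simp only [Finset.mem_filter, Finset.mem_univ, true_and] at hg ⊢
      constructor
      · exact fun a b hab => Fin.castSucc_le_castSucc_iff.mpr (hg hab)
      · exact ne_of_lt (Fin.castSucc_lt_last _)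
    · intro f hf
      funext k
      simp [Fin.castSucc_castPred]
    · intro g hg
      funext k
      simp [Fin.castPred_castSucc]
    · intro f hf
      exact Finset.prod_congr rfl fun k _ => by simp [Fin.castSucc_castPred]
  · -- last part
    rw [Finset.mul_sum]
    refine Finset.sum_bij' (fun f hf => f ∘ Fin.castSucc)
      (fun g hg => Fin.snoc g (Fin.last l)) ?_ ?_ ?_ ?_ ?_
    · intro f hf
      simp only [Finset.mem_filter, Finset.mem_univ, true_and] at hf ⊢
      exact hf.1.comp (fun a b hab => Fin.castSucc_le_castSucc_iff.mpr hab)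
    · intro g hg
      simp only [Finset.mem_filter, Finset.mem_univ, true_and] at hg ⊢
      exact ⟨monotone_snoc hg, Fin.snoc_last _ _⟩
    · intro f hf
      simp only [Finset.mem_filter, Finset.mem_univ, true_and] at hf
      show Fin.snoc (f ∘ Fin.castSucc) (Fin.last l) = f
      rw [show (f ∘ Fin.castSucc : Fin p → Fin (l+1)) = Fin.init f from rfl, ← hf.2,
        Fin.snoc_init_self]
    · intro g hg
      funext k
      simp [Fin.snoc_castSucc]
    · intro f hf
      simp only [Finset.mem_filter, Finset.mem_univ, true_and] at hf
      rw [Fin.prod_univ_castSucc, hf.2, mul_comm]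
      rfl

lemma ch_split (l q : ℕ) (ξ : Fin (l+1) → ℝ) :
    completeHomogeneous (l+1) q ξ =
      ∑ k ∈ Finset.range (q+1),
        ξ (Fin.last l) ^ k * completeHomogeneous l (q - k) (ξ ∘ Fin.castSucc) := by
  induction q with
  | zero => simp [ch_zero]
  | succ q ih =>
    rw [ch_rec, ih, Finset.mul_sum,
      Finset.sum_range_succ' (fun k =>
        ξ (Fin.last l) ^ k * completeHomogeneous l (q + 1 - k) (ξ ∘ Fin.castSucc)) (q + 1)]
    rw [add_comm]
    congr 1
    · exact Finset.sum_congr rfl fun k _ => by rw [show q + 1 - (k + 1) = q - k by omega]; ring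
    · simp

lemma partial_fractions (l : ℕ) : ∀ (x : Fin (l+1) → ℝ), Function.Injective x →
    ∀ y : ℝ, (∀ i, y ≠ x i) →
    ∑ i : Fin (l+1), 1 / ((∏ j ∈ univ.erase i, (x i - x j)) * (y - x i)) =
      1 / ∏ j, (y - x j) := by
  induction l with
  | zero =>
    intro x hx y hy
    simp
  | succ l ih =>
    intro x hx y hy
    have hx' : Function.Injective (fun j : Fin (l+1) => x j.castSucc) :=
      fun a b h => Fin.castSucc_injective _ (hx h)
    have hzx : ∀ i : Fin (l+1), x (Fin.last (l+1)) ≠ x i.castSucc :=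
      fun i h => (Fin.castSucc_lt_last i).ne (hx h).symm
    have hyz : y - x (Fin.last (l+1)) ≠ 0 := sub_ne_zero.mpr (hy _)
    have hPz : ∏ j : Fin (l+1), (x (Fin.last (l+1)) - x j.castSucc) ≠ 0 :=
      Finset.prod_ne_zero_iff.mpr fun j _ => sub_ne_zero.mpr (hzx j)
    have hPy : ∏ j : Fin (l+1), (y - x j.castSucc) ≠ 0 :=
      Finset.prod_ne_zero_iff.mpr fun j _ => sub_ne_zero.mpr (hy _)
    rw [Fin.sum_univ_castSucc]
    have key : ∀ i : Fin (l+1),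
        1 / ((∏ j ∈ univ.erase (Fin.castSucc i), (x (Fin.castSucc i) - x j)) *
            (y - x (Fin.castSucc i))) =
          (1 / (y - x (Fin.last (l+1)))) *
            (-(1 / ((∏ j ∈ univ.erase i, (x i.castSucc - x j.castSucc)) *
                (x (Fin.last (l+1)) - x i.castSucc))) +
              1 / ((∏ j ∈ univ.erase i, (x i.castSucc - x j.castSucc)) *
                (y - x i.castSucc))) := by
      intro i
      rw [prod_erase_castSucc (fun j => x (Fin.castSucc i) - x j) i]
      have h0 : ∏ j ∈ univ.erase i, (x i.castSucc - x j.castSucc) ≠ 0 := delta_ne_zero hx' i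
      have h1 : x i.castSucc - x (Fin.last (l+1)) ≠ 0 := sub_ne_zero.mpr (Ne.symm (hzx i))
      have h2 : y - x i.castSucc ≠ 0 := sub_ne_zero.mpr (hy _)
      have h3 : x (Fin.last (l+1)) - x i.castSucc ≠ 0 := sub_ne_zero.mpr (hzx i)
      field_simp
      ring
    simp only [key]
    rw [← Finset.mul_sum, Finset.sum_add_distrib, Finset.sum_neg_distrib]
    have e1 : ∑ i : Fin (l+1), 1 / ((∏ j ∈ univ.erase i, (x i.castSucc - x j.castSucc)) *
          (x (Fin.last (l+1)) - x i.castSucc)) =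
        1 / ∏ j : Fin (l+1), (x (Fin.last (l+1)) - x j.castSucc) := ih _ hx' _ hzx
    have e2 : ∑ i : Fin (l+1), 1 / ((∏ j ∈ univ.erase i, (x i.castSucc - x j.castSucc)) *
          (y - x i.castSucc)) =
        1 / ∏ j : Fin (l+1), (y - x j.castSucc) := ih _ hx' y fun i => hy _
    rw [e1, e2, prod_erase_last (fun j => x (Fin.last (l+1)) - x j),
      Fin.prod_univ_castSucc (fun j => y - x j)]
    field_simp
    ring

lemma lemA : ∀ (l m : ℕ) (x : Fin l → ℝ), Function.Injective x →
    ∑ i, x i ^ m / ∏ j ∈ univ.erase i, (x i - x j) =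
      if l ≤ m + 1 then completeHomogeneous l (m + 1 - l) x else 0 := by
  intro l
  induction l with
  | zero => intro m x hx; simp [ch_empty]
  | succ l ih =>
    cases l with
    | zero =>
      intro m x hx
      simp [ch_one]
    | succ n =>
      intro m x hx
      have hx' : Function.Injective (x ∘ Fin.castSucc) :=
        fun a b h => Fin.castSucc_injective _ (hx h)
      have hzx : ∀ i : Fin (n+1), x (Fin.last (n+1)) ≠ x i.castSucc :=
        fun i h => (Fin.castSucc_lt_last i).ne (hx h).symm
      have hΔ : ∀ i : Fin (n+1),
          ∏ j ∈ univ.erase i, (x i.castSucc - x j.castSucc) ≠ 0 :=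
        fun i => delta_ne_zero hx' i
      rw [Fin.sum_univ_castSucc]
      have key : ∀ i : Fin (n+1),
          x i.castSucc ^ m / (∏ j ∈ univ.erase i.castSucc, (x i.castSucc - x j)) =
            (∑ k ∈ range m, x i.castSucc ^ k * x (Fin.last (n+1)) ^ (m-1-k)) /
                (∏ j ∈ univ.erase i, (x i.castSucc - x j.castSucc)) +
              x (Fin.last (n+1)) ^ m *
                (-(1 / ((∏ j ∈ univ.erase i, (x i.castSucc - x j.castSucc)) *
                  (x (Fin.last (n+1)) - x i.castSucc)))) := by
        intro i
        rw [prod_erase_castSucc (fun j => x i.castSucc - x j) i]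
        have h0 := hΔ i
        have h1 : x i.castSucc - x (Fin.last (n+1)) ≠ 0 := sub_ne_zero.mpr (Ne.symm (hzx i))
        have h3 : x (Fin.last (n+1)) - x i.castSucc ≠ 0 := sub_ne_zero.mpr (hzx i)
        rw [show x i.castSucc ^ m =
          (∑ k ∈ range m, x i.castSucc ^ k * x (Fin.last (n+1)) ^ (m-1-k)) *
            (x i.castSucc - x (Fin.last (n+1))) + x (Fin.last (n+1)) ^ m from by
            linarith [geom_sum₂_mul (x i.castSucc) (x (Fin.last (n+1))) m]]
        field_simp
        ring
      simp only [key]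
      rw [Finset.sum_add_distrib, ← Finset.mul_sum, Finset.sum_neg_distrib]
      have epf : ∑ i : Fin (n+1),
          1 / ((∏ j ∈ univ.erase i, (x i.castSucc - x j.castSucc)) *
            (x (Fin.last (n+1)) - x i.castSucc)) =
          1 / ∏ j : Fin (n+1), (x (Fin.last (n+1)) - x j.castSucc) :=
        partial_fractions n _ hx' _ hzx
      rw [epf, prod_erase_last (fun j => x (Fin.last (n+1)) - x j), add_assoc,
        show x (Fin.last (n+1)) ^ m * -(1 / ∏ j : Fin (n+1), (x (Fin.last (n+1)) - x j.castSucc)) +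
          x (Fin.last (n+1)) ^ m / ∏ j : Fin (n+1), (x (Fin.last (n+1)) - x j.castSucc) = 0 from by
          ring, add_zero]
      have swap : ∑ i : Fin (n+1),
          (∑ k ∈ range m, x i.castSucc ^ k * x (Fin.last (n+1)) ^ (m-1-k)) /
            (∏ j ∈ univ.erase i, (x i.castSucc - x j.castSucc)) =
          ∑ k ∈ range m, x (Fin.last (n+1)) ^ (m-1-k) *
            ∑ i : Fin (n+1), x i.castSucc ^ k / (∏ j ∈ univ.erase i, (x i.castSucc - x j.castSucc)) := by
        simp only [Finset.sum_div]
        rw [Finset.sum_comm]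
        exact Finset.sum_congr rfl fun k _ => by
          rw [Finset.mul_sum]
          exact Finset.sum_congr rfl fun i _ => by ring
      rw [swap]
      have ihk : ∀ k : ℕ, ∑ i : Fin (n+1),
          x i.castSucc ^ k / (∏ j ∈ univ.erase i, (x i.castSucc - x j.castSucc)) =
          if n+1 ≤ k+1 then completeHomogeneous (n+1) (k+1-(n+1)) (x ∘ Fin.castSucc) else 0 :=
        fun k => ih k (x ∘ Fin.castSucc) hx'
      simp only [ihk]
      by_cases hm : n + 1 ≤ m
      · rw [if_pos (by omega), show m + 1 - (n+2) = m - (n+1) from by omega,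
          ch_split (n+1) (m - (n+1)) x,
          ← Finset.sum_range_reflect (fun k => x (Fin.last (n+1)) ^ k *
            completeHomogeneous (n+1) (m - (n+1) - k) (x ∘ Fin.castSucc)) (m - (n+1) + 1)]
        conv_lhs => rw [Finset.range_eq_Ico,
          ← Finset.sum_Ico_consecutive _ (Nat.zero_le n) (show n ≤ m by omega)]
        rw [Finset.sum_eq_zero (fun k hk => by
          rw [if_neg (by simp [Finset.mem_Ico] at hk; omega), mul_zero]), zero_add]
        rw [Finset.sum_Ico_eq_sum_range, show m - n = m - (n+1) + 1 from by omega]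
        refine Finset.sum_congr rfl fun j hj => ?_
        simp only [Finset.mem_range] at hj
        rw [if_pos (by omega), show m - (n+1) + 1 - 1 - j = m - (n+1) - j from by omega,
          show m - (n+1) - (m - (n+1) - j) = j from by omega,
          show m - 1 - (n + j) = m - (n+1) - j from by omega,
          show n + j + 1 - (n+1) = j from by omega]
      · rw [if_neg (by omega)]
        exact Finset.sum_eq_zero fun k hk => by
          simp only [Finset.mem_range] at hk
          rw [if_neg (by omega), mul_zero]

/-- For `l ≥ 1` pairwise distinct reals `ξ₁, …, ξ_l`, a real `α` distinct from all `ξ_i`,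
and `p ≥ 0`:
`∑ i, ξ i ^ (l + p) / (Δ(ξ i) * (ξ i - α)) = ∑_{k=0}^{p} h_{p-k}(ξ) α ^ k - α ^ (l + p) / p_nc(α)`,
where `Δ(ξ i) = ∏_{j ≠ i} (ξ i - ξ j)` and `p_nc(t) = ∏ j, (t - ξ j)`. -/
theorem vandermonde_identity_complicated_extended (l : ℕ) (hl : 1 ≤ l) (ξ : Fin l → ℝ)
    (hξ : Function.Injective ξ) (α : ℝ) (hα : ∀ i, α ≠ ξ i) (p : ℕ) :
    ∑ i : Fin l, ξ i ^ (l + p) / ((∏ j ∈ univ.erase i, (ξ i - ξ j)) * (ξ i - α)) =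
      (∑ k ∈ Finset.range (p + 1), completeHomogeneous l (p - k) ξ * α ^ k) -
        α ^ (l + p) / ∏ j : Fin l, (α - ξ j) := by
  have hz : Function.Injective (Fin.snoc ξ α : Fin (l+1) → ℝ) := by
    intro a b h
    rcases Fin.eq_castSucc_or_eq_last a with ⟨a', rfl⟩ | rfl <;>
      rcases Fin.eq_castSucc_or_eq_last b with ⟨b', rfl⟩ | rfl
    · simp only [Fin.snoc_castSucc] at h
      exact congrArg Fin.castSucc (hξ h)
    · simp only [Fin.snoc_castSucc, Fin.snoc_last] at h
      exact absurd h.symm (hα a')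
    · simp only [Fin.snoc_castSucc, Fin.snoc_last] at h
      exact absurd h (hα b')
    · rfl
  have H := lemA (l+1) (l+p) (Fin.snoc ξ α) hz
  rw [Fin.sum_univ_castSucc] at H
  simp only [prod_erase_castSucc, prod_erase_last, Fin.snoc_castSucc, Fin.snoc_last] at H
  rw [if_pos (by omega), show l + p + 1 - (l+1) = p from by omega,
    ch_split l p (Fin.snoc ξ α)] at H
  have e : (Fin.snoc ξ α : Fin (l+1) → ℝ) ∘ Fin.castSucc = ξ := by
    funext i
    simp [Fin.snoc_castSucc]
  rw [Fin.snoc_last, e] at H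
  rw [show (∑ k ∈ Finset.range (p + 1), completeHomogeneous l (p - k) ξ * α ^ k) =
      ∑ k ∈ Finset.range (p + 1), α ^ k * completeHomogeneous l (p - k) ξ from
    Finset.sum_congr rfl fun k _ => mul_comm _ _]
  linarith [H]
end

section
/- Let l ≥ 1, let ξ₁,…,ξ_l be pairwise distinct real numbers, and let α be a real number with α ≠ ξ_i for all i. For every integer s with 0 ≤ s ≤ l−1, one has ∑_{i=1}^{l} ξ_i^{s}/(Δ(ξ_i)(ξ_i − α)²) = p_nc′(α) α^{s}/p_nc(α)² − s α^{s−1}/p_nc(α), where the term s α^{s−1} is taken to be 0 when s = 0, and p_nc′(α) = ∑_{i=1}^{l} ∏_{j=1, j≠i}^{l} (α − ξ_j). -/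
open Finset Polynomial

lemma derivative_finset_prod' {ι : Type*} [DecidableEq ι] (t : Finset ι) (f : ι → ℝ[X]) :
    derivative (∏ j ∈ t, f j) = ∑ k ∈ t, (∏ j ∈ t.erase k, f j) * derivative (f k) := by
  rw [Finset.prod_eq_multiset_prod, Polynomial.derivative_prod, Finset.sum_eq_multiset_sum]
  congr 1

/-- For `l ≥ 1` pairwise distinct reals `ξ₁, …, ξ_l`, a real `α` distinct from all `ξ_i`,
and `0 ≤ s ≤ l - 1`:
`∑ i, ξ i ^ s / (Δ(ξ i) * (ξ i - α)²) = p_nc'(α) α ^ s / p_nc(α)² - s α^(s-1) / p_nc(α)`,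
where `Δ(ξ i) = ∏_{j ≠ i} (ξ i - ξ j)`, `p_nc(t) = ∏ j, (t - ξ j)` and
`p_nc'(α) = ∑ i, ∏_{j ≠ i} (α - ξ j)`; the term `s α^(s-1)` vanishes for `s = 0`
(as `(s : ℝ) = 0` then). -/
theorem vandermonde_identity_derivative (l : ℕ) (hl : 1 ≤ l) (ξ : Fin l → ℝ)
    (hξ : Function.Injective ξ) (α : ℝ) (hα : ∀ i, α ≠ ξ i) (s : ℕ) (hs : s ≤ l - 1) :
    ∑ i : Fin l, ξ i ^ s / ((∏ j ∈ univ.erase i, (ξ i - ξ j)) * (ξ i - α) ^ 2) =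
      (∑ i : Fin l, ∏ j ∈ univ.erase i, (α - ξ j)) * α ^ s / (∏ j : Fin l, (α - ξ j)) ^ 2 -
        (s : ℝ) * α ^ (s - 1) / ∏ j : Fin l, (α - ξ j) := by
  classical
  set Δ : Fin l → ℝ := fun i => ∏ j ∈ univ.erase i, (ξ i - ξ j) with hΔdef
  set c : Fin l → ℝ := fun i => ξ i ^ s / Δ i with hcdef
  set q : Fin l → ℝ[X] := fun i => ∏ j ∈ univ.erase i, (X - C (ξ j)) with hqdef
  set p : ℝ[X] := ∏ j : Fin l, (X - C (ξ j)) with hpdef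
  have hΔne : ∀ i, Δ i ≠ 0 := by
    intro i
    refine Finset.prod_ne_zero_iff.mpr fun j hj => ?_
    exact sub_ne_zero.mpr fun h => (mem_erase.mp hj).1 (hξ h.symm)
  -- Lagrange identity
  have hL : (∑ i : Fin l, C (c i) * q i) = (X : ℝ[X]) ^ s := by
    have hinj : Set.InjOn ξ (univ : Finset (Fin l)) := hξ.injOn
    have hdeg : ((X : ℝ[X]) ^ s).degree < (univ : Finset (Fin l)).card := by
      rw [degree_X_pow, Finset.card_univ, Fintype.card_fin]
      exact_mod_cast lt_of_le_of_lt hs (Nat.sub_lt hl one_pos)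
    have h := Lagrange.eq_interpolate hinj hdeg
    rw [Lagrange.interpolate_apply] at h
    rw [← h.symm]
    refine Finset.sum_congr rfl fun i _ => ?_
    simp only [Lagrange.basis, Lagrange.basisDivisor, eval_pow, eval_X]
    rw [Finset.prod_mul_distrib, ← map_prod, ← mul_assoc, ← C_mul]
    congr 2
    rw [hcdef, hΔdef]
    simp only
    rw [div_eq_mul_inv, Finset.prod_inv_distrib]
  -- q i * q k for k ≠ i
  have hq_mul : ∀ i : Fin l, ∀ k ∈ univ.erase i,
      q i * q k = p * ∏ j ∈ (univ.erase i).erase k, (X - C (ξ j)) := by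
    intro i k hk
    have hki : k ≠ i := (mem_erase.mp hk).1
    have h1 : (X - C (ξ k)) * ∏ j ∈ (univ.erase i).erase k, (X - C (ξ j))
        = ∏ j ∈ univ.erase i, (X - C (ξ j)) :=
      Finset.mul_prod_erase _ (fun j => X - C (ξ j)) hk
    have h2 : (X - C (ξ i)) * ∏ j ∈ (univ.erase k).erase i, (X - C (ξ j))
        = ∏ j ∈ univ.erase k, (X - C (ξ j)) :=
      Finset.mul_prod_erase _ (fun j => X - C (ξ j))
        (mem_erase.mpr ⟨fun h => hki h.symm, mem_univ i⟩)
    have h3 : (univ.erase k).erase i = (univ.erase i).erase k := Finset.erase_right_comm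
    have h4 : (X - C (ξ i)) * ∏ j ∈ univ.erase i, (X - C (ξ j))
        = ∏ j : Fin l, (X - C (ξ j)) :=
      Finset.mul_prod_erase _ (fun j => X - C (ξ j)) (mem_univ i)
    rw [h3] at h2
    show (∏ j ∈ univ.erase i, (X - C (ξ j))) * ∏ j ∈ univ.erase k, (X - C (ξ j))
        = (∏ j : Fin l, (X - C (ξ j))) * ∏ j ∈ (univ.erase i).erase k, (X - C (ξ j))
    rw [← h1, ← h2, ← h4, ← h1]
    ring
  have hq_deriv : ∀ i : Fin l, derivative (q i) =
      ∑ k ∈ univ.erase i, ∏ j ∈ (univ.erase i).erase k, (X - C (ξ j)) := by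
    intro i
    show derivative (∏ j ∈ univ.erase i, (X - C (ξ j))) = _
    rw [derivative_finset_prod']
    simp
  -- key algebraic identity
  have hkey : (∑ k : Fin l, q k) * (∑ i : Fin l, C (c i) * q i)
      = (∑ i : Fin l, C (c i) * (q i) ^ 2)
        + p * derivative (∑ i : Fin l, C (c i) * q i) := by
    rw [derivative_sum]
    simp only [derivative_mul, derivative_C, zero_mul, zero_add, hq_deriv]
    rw [Finset.mul_sum, Finset.mul_sum, ← Finset.sum_add_distrib]
    refine Finset.sum_congr rfl fun i _ => ?_
    rw [← Finset.sum_erase_add _ _ (mem_univ i), add_mul, Finset.sum_mul]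
    have h5 : ∑ k ∈ univ.erase i, q k * (C (c i) * q i)
        = p * (C (c i) * ∑ k ∈ univ.erase i, ∏ j ∈ (univ.erase i).erase k, (X - C (ξ j))) := by
      rw [Finset.mul_sum, Finset.mul_sum]
      refine Finset.sum_congr rfl fun k hk => ?_
      have h6 := hq_mul i k hk
      calc q k * (C (c i) * q i) = C (c i) * (q i * q k) := by ring
        _ = C (c i) * (p * ∏ j ∈ (univ.erase i).erase k, (X - C (ξ j))) := by rw [h6]
        _ = p * (C (c i) * ∏ j ∈ (univ.erase i).erase k, (X - C (ξ j))) := by ring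
    rw [h5]
    ring
  rw [hL] at hkey
  rw [derivative_X_pow] at hkey
  -- evaluate at α
  have heval := congrArg (Polynomial.eval α) hkey
  simp only [eval_mul, eval_add, eval_pow, eval_X, eval_finset_sum, eval_C, eval_prod,
    eval_sub, eval_natCast] at heval
  set Q : Fin l → ℝ := fun i => ∏ j ∈ univ.erase i, (α - ξ j) with hQdef
  set P : ℝ := ∏ j : Fin l, (α - ξ j) with hPdef
  have hQeval : ∀ i, Polynomial.eval α (q i) = Q i := by
    intro i
    show Polynomial.eval α (∏ j ∈ univ.erase i, (X - C (ξ j))) = _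
    simp [eval_prod, hQdef]
  have hPeval : Polynomial.eval α p = P := by
    show Polynomial.eval α (∏ j : Fin l, (X - C (ξ j))) = _
    simp [eval_prod, hPdef]
  have hQne : ∀ i, Q i ≠ 0 := fun i =>
    Finset.prod_ne_zero_iff.mpr fun j _ => sub_ne_zero.mpr (hα j)
  have hPne : P ≠ 0 :=
    Finset.prod_ne_zero_iff.mpr fun j _ => sub_ne_zero.mpr (hα j)
  have hPQ : ∀ i, P = (α - ξ i) * Q i := fun i => (Finset.mul_prod_erase _ _ (mem_univ i)).symm
  simp only [hQeval, hPeval] at heval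
  -- heval : (∑ Q i) * α^s = ∑ c i * (Q i)^2 + P * (s * α^(s-1))
  have hterm : ∀ i : Fin l, ξ i ^ s / (Δ i * (ξ i - α) ^ 2) = c i * (Q i) ^ 2 / P ^ 2 := by
    intro i
    have hαi : ξ i - α ≠ 0 := sub_ne_zero.mpr fun h => hα i h.symm
    have hP2 : P ^ 2 = (ξ i - α) ^ 2 * (Q i) ^ 2 := by rw [hPQ i]; ring
    rw [hP2, hcdef]
    field_simp [hΔne i, hαi, hQne i]
  calc ∑ i : Fin l, ξ i ^ s / (Δ i * (ξ i - α) ^ 2)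
      = ∑ i : Fin l, c i * (Q i) ^ 2 / P ^ 2 := Finset.sum_congr rfl fun i _ => hterm i
    _ = (∑ i : Fin l, c i * (Q i) ^ 2) / P ^ 2 := by rw [← Finset.sum_div]
    _ = ((∑ i : Fin l, Q i) * α ^ s - P * ((s : ℝ) * α ^ (s - 1))) / P ^ 2 := by
        rw [eq_sub_of_add_eq heval.symm]
    _ = (∑ i : Fin l, Q i) * α ^ s / P ^ 2 - (s : ℝ) * α ^ (s - 1) / P := by
        rw [sub_div]
        congr 1
        rw [pow_two, mul_div_mul_left _ _ hPne]
end

section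
/- Let l ≥ 2, let ξ₁,…,ξ_l be pairwise distinct real numbers, let α₁,…,α_{l−1} be pairwise distinct real numbers, and let m be an integer with 1 ≤ m ≤ l−1. Then ∑_{i=1}^{l} [∏_{k=1}^{l−1}(ξ_i − α_k)/Δ(ξ_i)] · (∏_{k=1, k≠i}^{l}(α_m − ξ_k))² = −p_nc(α_m) · Δ_m(α₁,…,α_{l−1}). -/
/-!
In the `i`-th summand the factor `(ξ i - α m) * ∏_{k ≠ i} (α m - ξ k)` equals `-p_nc(α m)`.
What remains is the Lagrange interpolation formula on the nodes `ξ` for the polynomial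
`∏_{k ≠ m} (t - α k)`, of degree `l - 2 < l`, evaluated at `t = α m`; its value there is `Δ_m`.
-/

open Finset Polynomial

theorem Lagrange.eval_eq_sum_eval_mul_prod_div {F ι : Type*} [Field F] [DecidableEq ι]
    {s : Finset ι} {v : ι → F} (hvs : Set.InjOn v s) {f : F[X]} (hf : f.degree < #s) (x : F) :
    f.eval x =
      ∑ i ∈ s, f.eval (v i) * ((∏ j ∈ s.erase i, (x - v j)) / ∏ j ∈ s.erase i, (v i - v j)) := by
  conv_lhs => rw [Lagrange.eq_interpolate hvs hf]
  simp only [Lagrange.interpolate_apply, eval_finsetSum, eval_mul, eval_C, Lagrange.basis,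
    Lagrange.basisDivisor, eval_prod, eval_sub, eval_X, div_eq_inv_mul, prod_mul_distrib,
    prod_inv_distrib]

theorem prod_sub_eq_sum_prod_sub_mul_lagrange {F ι κ : Type*} [Field F] [Fintype ι]
    [DecidableEq ι] {ξ : ι → F} (hξ : Function.Injective ξ) (β : κ → F) {t : Finset κ}
    (ht : #t < Fintype.card ι) (x : F) :
    ∏ k ∈ t, (x - β k) =
      ∑ i, (∏ k ∈ t, (ξ i - β k)) *
        ((∏ j ∈ univ.erase i, (x - ξ j)) / ∏ j ∈ univ.erase i, (ξ i - ξ j)) := by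
  have hdeg : (∏ k ∈ t, (X - C (β k))).degree < (#(univ : Finset ι) : WithBot ℕ) := by
    simpa [degree_prod] using ht
  simpa [eval_prod] using Lagrange.eval_eq_sum_eval_mul_prod_div hξ.injOn hdeg x

theorem g_theta_diagonal_general (l : ℕ) (ξ : Fin l → ℝ)
    (hξ : Function.Injective ξ) (α : Fin (l - 1) → ℝ)
    (m : Fin (l - 1)) :
    ∑ i : Fin l,
      (∏ k : Fin (l - 1), (ξ i - α k)) / (∏ j ∈ univ.erase i, (ξ i - ξ j)) *
        (∏ k ∈ univ.erase i, (α m - ξ k)) ^ 2 =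
      -(∏ j : Fin l, (α m - ξ j)) * ∏ k ∈ univ.erase m, (α m - α k) := by
  have hcard : #(univ.erase m) < Fintype.card (Fin l) := by
    simp only [card_erase_of_mem (mem_univ m), card_univ, Fintype.card_fin]
    have := m.isLt
    omega
  rw [prod_sub_eq_sum_prod_sub_mul_lagrange hξ α hcard (α m), mul_sum]
  refine sum_congr rfl fun i _ => ?_
  rw [← mul_prod_erase univ (fun k => ξ i - α k) (mem_univ m),
    ← mul_prod_erase univ (fun j => α m - ξ j) (mem_univ i)]
  ring

/-- For `l ≥ 2`, pairwise distinct reals `ξ₁, …, ξ_l`, pairwise distinct reals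
`α₁, …, α_{l-1}`, and `1 ≤ m ≤ l-1`:
`∑ i, (∏_{k=1}^{l-1} (ξ i - α k) / Δ(ξ i)) * (∏_{k ≠ i} (α m - ξ k))²
  = -p_nc(α m) * Δ_m(α₁, …, α_{l-1})`,
where `Δ(ξ i) = ∏_{j ≠ i} (ξ i - ξ j)`, `p_nc(t) = ∏ j, (t - ξ j)` and
`Δ_m(α) = ∏_{k ≠ m} (α m - α k)`. -/
theorem g_theta_diagonal (l : ℕ) (hl : 2 ≤ l) (ξ : Fin l → ℝ)
    (hξ : Function.Injective ξ) (α : Fin (l - 1) → ℝ) (hα : Function.Injective α)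
    (m : Fin (l - 1)) :
    ∑ i : Fin l,
      (∏ k : Fin (l - 1), (ξ i - α k)) / (∏ j ∈ univ.erase i, (ξ i - ξ j)) *
        (∏ k ∈ univ.erase i, (α m - ξ k)) ^ 2 =
      -(∏ j : Fin l, (α m - ξ j)) * ∏ k ∈ univ.erase m, (α m - α k) :=
  g_theta_diagonal_general l ξ hξ α m
end

section
/- Let l ≥ 2, let ξ₁,…,ξ_l be pairwise distinct real numbers, let α₁,…,α_{l−1}, α_l be real numbers, and let m be an integer with 1 ≤ m ≤ l−1. Then ∑_{i=1}^{l} [∏_{k=1}^{l−1}(ξ_i − α_k)/Δ(ξ_i)] · ∏_{k=1, k≠i}^{l}(α_m − ξ_k) · ∏_{k=1, k≠i}^{l}(α_l − ξ_k) = −p_nc(α_m) · ∏_{k=1, k≠m}^{l−1}(α_l − α_k). -/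
open Finset

/-- For `l ≥ 2`, pairwise distinct reals `ξ₁, …, ξ_l`, arbitrary reals `α₁, …, α_{l-1}, α_l`
and `1 ≤ m ≤ l-1`:
`∑ i, (∏_{k=1}^{l-1} (ξ i - α k) / Δ(ξ i)) * ∏_{k ≠ i} (α m - ξ k) * ∏_{k ≠ i} (α_l - ξ k)
  = -p_nc(α m) * ∏_{k ≠ m, k ≤ l-1} (α_l - α k)`,
where `Δ(ξ i) = ∏_{j ≠ i} (ξ i - ξ j)` and `p_nc(t) = ∏ j, (t - ξ j)`. -/
theorem g_theta_mixed (l : ℕ) (hl : 2 ≤ l) (ξ : Fin l → ℝ)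
    (hξ : Function.Injective ξ) (α : Fin (l - 1) → ℝ) (αl : ℝ) (m : Fin (l - 1)) :
    ∑ i : Fin l,
      (∏ k : Fin (l - 1), (ξ i - α k)) / (∏ j ∈ univ.erase i, (ξ i - ξ j)) *
        (∏ k ∈ univ.erase i, (α m - ξ k)) * (∏ k ∈ univ.erase i, (αl - ξ k)) =
      -(∏ j : Fin l, (α m - ξ j)) * ∏ k ∈ univ.erase m, (αl - α k) := by
  classical
  have hξ' : Set.InjOn ξ ((univ : Finset (Fin l)) : Set (Fin l)) := fun a _ b _ h => hξ h
  set g : Polynomial ℝ :=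
    ∏ k ∈ (univ : Finset (Fin (l - 1))).erase m, (Polynomial.X - Polynomial.C (α k)) with hg
  have hgne : g ≠ 0 := by
    apply Finset.prod_ne_zero_iff.mpr
    intro k _
    exact Polynomial.X_sub_C_ne_zero (α k)
  have hnd : g.natDegree = ((univ : Finset (Fin (l - 1))).erase m).card := by
    rw [hg, Polynomial.natDegree_prod _ _ (fun k _ => Polynomial.X_sub_C_ne_zero (α k))]
    simp
  have hdeg : g.degree < ((univ : Finset (Fin l)).card : ℕ) := by
    have h1 : g.natDegree < (univ : Finset (Fin l)).card := by
      rw [hnd]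
      simp only [card_erase_of_mem (mem_univ m), card_univ, Fintype.card_fin]
      omega
    exact lt_of_le_of_lt Polynomial.degree_le_natDegree (by exact_mod_cast h1)
  -- Lagrange interpolation reproduces g
  have hkey : ∀ t : ℝ, g.eval t =
      ∑ i : Fin l, g.eval (ξ i) * ∏ j ∈ univ.erase i, ((ξ i - ξ j)⁻¹ * (t - ξ j)) := by
    intro t
    conv_lhs => rw [Lagrange.eq_interpolate hξ' hdeg]
    rw [Lagrange.interpolate_apply, Polynomial.eval_finset_sum]
    refine Finset.sum_congr rfl fun i _ => ?_
    rw [Polynomial.eval_mul, Polynomial.eval_C, Lagrange.basis]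
    congr 1
    rw [Polynomial.eval_prod]
    exact Finset.prod_congr rfl fun j _ => by simp [Lagrange.basisDivisor]
  have hgeval : ∀ x : ℝ, g.eval x = ∏ k ∈ (univ : Finset (Fin (l - 1))).erase m, (x - α k) := by
    intro x
    rw [hg, Polynomial.eval_prod]
    simp
  calc
    ∑ i : Fin l,
      (∏ k : Fin (l - 1), (ξ i - α k)) / (∏ j ∈ univ.erase i, (ξ i - ξ j)) *
        (∏ k ∈ univ.erase i, (α m - ξ k)) * (∏ k ∈ univ.erase i, (αl - ξ k))
      = ∑ i : Fin l, -(∏ j : Fin l, (α m - ξ j)) *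
          (g.eval (ξ i) * ∏ j ∈ univ.erase i, ((ξ i - ξ j)⁻¹ * (αl - ξ j))) := by
        refine Finset.sum_congr rfl fun i _ => ?_
        have hAP : (∏ k : Fin (l - 1), (ξ i - α k)) * (∏ k ∈ univ.erase i, (α m - ξ k))
            = -(∏ j : Fin l, (α m - ξ j)) * g.eval (ξ i) := by
          rw [hgeval,
            ← Finset.mul_prod_erase univ (fun k => ξ i - α k) (mem_univ m),
            ← Finset.mul_prod_erase univ (fun j => α m - ξ j) (mem_univ i)]
          ring
        rw [Finset.prod_mul_distrib, Finset.prod_inv_distrib, div_eq_mul_inv]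
        calc (∏ k : Fin (l - 1), (ξ i - α k)) * (∏ j ∈ univ.erase i, (ξ i - ξ j))⁻¹ *
              (∏ k ∈ univ.erase i, (α m - ξ k)) * (∏ k ∈ univ.erase i, (αl - ξ k))
            = ((∏ k : Fin (l - 1), (ξ i - α k)) * (∏ k ∈ univ.erase i, (α m - ξ k))) *
              ((∏ j ∈ univ.erase i, (ξ i - ξ j))⁻¹ * (∏ k ∈ univ.erase i, (αl - ξ k))) := by
              ring
          _ = _ := by rw [hAP]; ring
    _ = -(∏ j : Fin l, (α m - ξ j)) *
          ∑ i : Fin l, g.eval (ξ i) * ∏ j ∈ univ.erase i, ((ξ i - ξ j)⁻¹ * (αl - ξ j)) := by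
        rw [Finset.mul_sum]
    _ = -(∏ j : Fin l, (α m - ξ j)) * ∏ k ∈ univ.erase m, (αl - α k) := by
        rw [← hkey αl, hgeval]
end

section
/- Let l ≥ 2, let ξ₁,…,ξ_l be pairwise distinct real numbers, and let α₁,…,α_{l−1}, α_l be real numbers. Then ∑_{i=1}^{l} [∏_{k=1}^{l−1}(ξ_i − α_k)/Δ(ξ_i)] · (∏_{k=1, k≠i}^{l}(α_l − ξ_k))² = p_nc′(α_l) · ∏_{k=1}^{l−1}(α_l − α_k) − p_nc(α_l) · ∑_{j=1}^{l−1} ∏_{k=1, k≠j}^{l−1}(α_l − α_k), where p_nc′(α_l) = ∑_{i=1}^{l} ∏_{j=1, j≠i}^{l}(α_l − ξ_j). -/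
open Finset Polynomial

private lemma deriv_prod_eval {ι : Type*} [DecidableEq ι] (s : Finset ι) (a : ι → ℝ) (t : ℝ) :
    (Polynomial.derivative (∏ j ∈ s, (X - C (a j)))).eval t
      = ∑ j ∈ s, ∏ k ∈ s.erase j, (t - a k) := by
  induction s using Finset.induction_on with
  | empty => simp
  | @insert i s' hi ih =>
    rw [Finset.prod_insert hi, derivative_mul, derivative_sub, derivative_X, derivative_C,
      sub_zero, one_mul, eval_add, eval_mul, eval_sub, eval_X, eval_C, ih,
      Finset.sum_insert hi, Finset.erase_insert hi, eval_prod]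
    simp only [eval_sub, eval_X, eval_C]
    congr 1
    rw [Finset.mul_sum]
    refine Finset.sum_congr rfl fun j hj => ?_
    have hij : i ≠ j := fun h => hi (h ▸ hj)
    rw [Finset.erase_insert_of_ne hij,
      Finset.prod_insert (fun h => hi (Finset.mem_of_mem_erase h))]

/-- For `l ≥ 2`, pairwise distinct reals `ξ₁, …, ξ_l` and arbitrary reals
`α₁, …, α_{l-1}, α_l`:
`∑ i, (∏_{k=1}^{l-1} (ξ i - α k) / Δ(ξ i)) * (∏_{k ≠ i} (α_l - ξ k))²
  = p_nc'(α_l) ∏_{k=1}^{l-1} (α_l - α k) - p_nc(α_l) ∑_{j=1}^{l-1} ∏_{k ≠ j} (α_l - α k)`,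
where `Δ(ξ i) = ∏_{j ≠ i} (ξ i - ξ j)`, `p_nc(t) = ∏ j, (t - ξ j)` and
`p_nc'(α_l) = ∑ i, ∏_{j ≠ i} (α_l - ξ j)`. -/
theorem g_theta_last_diagonal (l : ℕ) (hl : 2 ≤ l) (ξ : Fin l → ℝ)
    (hξ : Function.Injective ξ) (α : Fin (l - 1) → ℝ) (αl : ℝ) :
    ∑ i : Fin l,
      (∏ k : Fin (l - 1), (ξ i - α k)) / (∏ j ∈ univ.erase i, (ξ i - ξ j)) *
        (∏ k ∈ univ.erase i, (αl - ξ k)) ^ 2 =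
      (∑ i : Fin l, ∏ j ∈ univ.erase i, (αl - ξ j)) * (∏ k : Fin (l - 1), (αl - α k)) -
        (∏ j : Fin l, (αl - ξ j)) *
          ∑ j : Fin (l - 1), ∏ k ∈ univ.erase j, (αl - α k) := by
  classical
  set Q : ℝ[X] := ∏ k : Fin (l - 1), (X - C (α k)) with hQdef
  have hinj : Set.InjOn ξ (univ : Finset (Fin l)) := fun a _ b _ h => hξ h
  have hdeg : Q.degree < (univ : Finset (Fin l)).card := by
    have : Q.degree = (l - 1 : ℕ) := by
      rw [hQdef, degree_prod]
      simp [degree_X_sub_C]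
    rw [this]
    simp only [card_univ, Fintype.card_fin]
    exact_mod_cast Nat.sub_lt (by omega) one_pos
  have hL : (Lagrange.interpolate univ ξ fun i => Q.eval (ξ i)) = Q :=
    (Lagrange.eq_interpolate hinj hdeg).symm
  set c : Fin l → ℝ := fun i => Q.eval (ξ i) * (∏ j ∈ univ.erase i, (ξ i - ξ j))⁻¹ with hc
  set N : Fin l → ℝ[X] := fun i => ∏ j ∈ univ.erase i, (X - C (ξ j)) with hN
  have hbasis : ∀ i : Fin l,
      Lagrange.basis univ ξ i = C ((∏ j ∈ univ.erase i, (ξ i - ξ j))⁻¹) * N i := by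
    intro i
    unfold Lagrange.basis Lagrange.basisDivisor
    rw [prod_mul_distrib]
    congr 1
    rw [← Finset.prod_inv_distrib]
    exact (map_prod (C : ℝ →+* ℝ[X]) _ _).symm
  have hP : Q = ∑ i : Fin l, C (c i) * N i := by
    conv_lhs => rw [← hL]
    rw [Lagrange.interpolate_apply]
    refine Finset.sum_congr rfl fun i _ => ?_
    rw [hbasis i, hc, ← mul_assoc, ← C_mul]
  have hNeval : ∀ i : Fin l, (N i).eval αl = ∏ j ∈ univ.erase i, (αl - ξ j) := by
    intro i
    show (∏ j ∈ univ.erase i, (X - C (ξ j))).eval αl = _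
    simp [eval_prod]
  have hEval : (∏ k : Fin (l - 1), (αl - α k))
      = ∑ i : Fin l, c i * ∏ j ∈ univ.erase i, (αl - ξ j) := by
    have h := congrArg (Polynomial.eval αl) hP
    simp only [hQdef, eval_prod, eval_sub, eval_X, eval_C, eval_finset_sum, eval_mul] at h
    rw [h]
    exact Finset.sum_congr rfl fun i _ => by rw [hNeval i]
  have hderiv : Polynomial.derivative Q = ∑ i : Fin l, C (c i) * Polynomial.derivative (N i) := by
    rw [hP, map_sum]
    exact Finset.sum_congr rfl fun i _ => Polynomial.derivative_C_mul _ _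
  have hQ' : (Polynomial.derivative Q).eval αl
      = ∑ j : Fin (l - 1), ∏ k ∈ univ.erase j, (αl - α k) := by
    rw [hQdef]; exact deriv_prod_eval _ _ _
  have hDN : ∀ i : Fin l, (Polynomial.derivative (N i)).eval αl
      = ∑ j ∈ univ.erase i, ∏ k ∈ (univ.erase i).erase j, (αl - ξ k) := by
    intro i
    show (Polynomial.derivative (∏ j ∈ univ.erase i, (X - C (ξ j)))).eval αl = _
    exact deriv_prod_eval _ _ _
  have hDEval : (∑ j : Fin (l - 1), ∏ k ∈ univ.erase j, (αl - α k))
      = ∑ i : Fin l, c i * ∑ j ∈ univ.erase i, ∏ k ∈ (univ.erase i).erase j, (αl - ξ k) := by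
    rw [← hQ', hderiv, eval_finset_sum]
    refine Finset.sum_congr rfl fun i _ => ?_
    rw [eval_mul, eval_C, hDN i]
  have key : ∀ i : Fin l,
      (∑ j : Fin l, ∏ k ∈ univ.erase j, (αl - ξ k)) * (∏ j ∈ univ.erase i, (αl - ξ j)) -
        (∏ j : Fin l, (αl - ξ j)) *
          ∑ j ∈ univ.erase i, ∏ k ∈ (univ.erase i).erase j, (αl - ξ k) =
      (∏ j ∈ univ.erase i, (αl - ξ j)) ^ 2 := by
    intro i
    set x : Fin l → ℝ := fun k => αl - ξ k with hx
    have h1 : ∑ j : Fin l, ∏ k ∈ univ.erase j, x k =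
        (∏ k ∈ univ.erase i, x k) + ∑ j ∈ univ.erase i, ∏ k ∈ univ.erase j, x k :=
      (Finset.add_sum_erase univ _ (mem_univ i)).symm
    have h2 : ∀ j ∈ univ.erase i,
        (∏ k ∈ univ.erase j, x k) * (∏ k ∈ univ.erase i, x k) =
        (∏ k : Fin l, x k) * ∏ k ∈ (univ.erase i).erase j, x k := by
      intro j hj
      have hji : j ≠ i := (mem_erase.mp hj).1
      have e1 : (∏ k ∈ univ.erase j, x k) = x i * ∏ k ∈ (univ.erase j).erase i, x k :=
        (Finset.mul_prod_erase _ _ (mem_erase.mpr ⟨hji.symm, mem_univ i⟩)).symm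
      have e2 : (∏ k ∈ univ.erase i, x k) = x j * ∏ k ∈ (univ.erase i).erase j, x k :=
        (Finset.mul_prod_erase _ _ (mem_erase.mpr ⟨hji, mem_univ j⟩)).symm
      have e3 : (∏ k : Fin l, x k) = x i * ∏ k ∈ univ.erase i, x k :=
        (Finset.mul_prod_erase _ _ (mem_univ i)).symm
      rw [e1, e3, e2, Finset.erase_right_comm (a := j) (b := i)]
      ring
    rw [h1, add_mul, Finset.sum_mul, Finset.sum_congr rfl h2, ← Finset.mul_sum, sq]
    ring
  calc ∑ i : Fin l,
      (∏ k : Fin (l - 1), (ξ i - α k)) / (∏ j ∈ univ.erase i, (ξ i - ξ j)) *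
        (∏ k ∈ univ.erase i, (αl - ξ k)) ^ 2
      = ∑ i : Fin l, c i * (∏ k ∈ univ.erase i, (αl - ξ k)) ^ 2 := by
        refine Finset.sum_congr rfl fun i _ => ?_
        rw [hc, hQdef]
        simp [eval_prod, div_eq_mul_inv]
    _ = ∑ i : Fin l, c i *
        ((∑ j : Fin l, ∏ k ∈ univ.erase j, (αl - ξ k)) * (∏ j ∈ univ.erase i, (αl - ξ j)) -
          (∏ j : Fin l, (αl - ξ j)) *
            ∑ j ∈ univ.erase i, ∏ k ∈ (univ.erase i).erase j, (αl - ξ k)) := by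
        refine Finset.sum_congr rfl fun i _ => ?_
        rw [key i]
    _ = _ := by
        rw [hEval, hDEval, Finset.mul_sum, Finset.mul_sum, ← Finset.sum_sub_distrib]
        refine Finset.sum_congr rfl fun i _ => ?_
        ring
end

section
/- Let n ≥ 2 be an integer. For real numbers ξ₁ ≤ 0 and ξ₂ ≥ 1, define H(ξ₁,ξ₂) = (1/2)ξ₁² − ξ₁ + (1/2)ξ₂² − ξ₂ + ∫₀^{ξ₂} (1 + t + … + t^{n−2})^{−1} dt + 4, where the integrand is 1/(∑_{k=0}^{n−2} t^k). Then (1/4)(ξ₁² + ξ₂²) < H(ξ₁,ξ₂) ≤ (11/2)(ξ₁² + ξ₂²); in particular H(ξ₁,ξ₂) > 1/4. -/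
open Finset

/-- The Kähler potential `H(ξ₁, ξ₂) = ½ξ₁² - ξ₁ + ½ξ₂² - ξ₂
    + ∫₀^{ξ₂} dt / (1 + t + ⋯ + t^(n-2)) + 4`. -/
noncomputable def kahlerPotentialH (n : ℕ) (ξ₁ ξ₂ : ℝ) : ℝ :=
  (1 / 2) * ξ₁ ^ 2 - ξ₁ + (1 / 2) * ξ₂ ^ 2 - ξ₂ +
    (∫ t in (0 : ℝ)..ξ₂, 1 / ∑ k ∈ Finset.range (n - 1), t ^ k) + 4

/-- For `n ≥ 2`, `ξ₁ ≤ 0` and `ξ₂ ≥ 1`, the potential `H` satisfies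
`¼(ξ₁² + ξ₂²) < H(ξ₁, ξ₂) ≤ (11/2)(ξ₁² + ξ₂²)`; in particular `H(ξ₁, ξ₂) > ¼`. -/
theorem kahlerPotentialH_bounds (n : ℕ) (hn : 2 ≤ n) (ξ₁ ξ₂ : ℝ)
    (h1 : ξ₁ ≤ 0) (h2 : 1 ≤ ξ₂) :
    (1 / 4) * (ξ₁ ^ 2 + ξ₂ ^ 2) < kahlerPotentialH n ξ₁ ξ₂ ∧
      kahlerPotentialH n ξ₁ ξ₂ ≤ (11 / 2) * (ξ₁ ^ 2 + ξ₂ ^ 2) ∧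
      (1 / 4 : ℝ) < kahlerPotentialH n ξ₁ ξ₂ := by
  set S : ℝ → ℝ := fun t => ∑ k ∈ Finset.range (n - 1), t ^ k with hSdef
  have h0 : (0 : ℝ) ≤ ξ₂ := by linarith
  have hS : ∀ t : ℝ, 0 ≤ t → 1 ≤ S t := by
    intro t ht
    have h0mem : 0 ∈ Finset.range (n - 1) := by
      simp [Nat.sub_pos_of_lt (by omega : 1 < n)]
    calc (1 : ℝ) = t ^ 0 := by simp
      _ ≤ S t := Finset.single_le_sum (fun k _ => pow_nonneg ht k) h0mem
  have hcont : ContinuousOn (fun t => 1 / S t) (Set.Icc 0 ξ₂) := by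
    apply ContinuousOn.div continuousOn_const
    · exact (Continuous.continuousOn (by continuity))
    · intro t ht
      have := hS t ht.1
      linarith
  have hint : IntervalIntegrable (fun t => 1 / S t) MeasureTheory.volume 0 ξ₂ := by
    apply ContinuousOn.intervalIntegrable
    rwa [Set.uIcc_of_le h0]
  have hnonneg : 0 ≤ ∫ t in (0 : ℝ)..ξ₂, 1 / S t := by
    apply intervalIntegral.integral_nonneg h0
    intro t ht
    have := hS t ht.1
    positivity
  have hupper : (∫ t in (0 : ℝ)..ξ₂, 1 / S t) ≤ ξ₂ := by
    have : (∫ t in (0 : ℝ)..ξ₂, 1 / S t) ≤ ∫ _ in (0 : ℝ)..ξ₂, (1 : ℝ) := by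
      apply intervalIntegral.integral_mono_on h0 hint intervalIntegrable_const
      intro t ht
      have h1t := hS t ht.1
      rw [div_le_one (by linarith)]
      exact h1t
    simpa using this
  have hsq : 1 ≤ ξ₂ ^ 2 := by nlinarith
  unfold kahlerPotentialH
  have heq : (∫ t in (0 : ℝ)..ξ₂, 1 / ∑ k ∈ Finset.range (n - 1), t ^ k)
      = ∫ t in (0 : ℝ)..ξ₂, 1 / S t := rfl
  rw [heq]
  refine ⟨by nlinarith, by nlinarith, by nlinarith⟩
end

section
/- Let a, b, c be real numbers with a < b and c ≤ a. Then ∫_a^b √((t − c)/(t − a)) dt ≤ 2√(b − c)·√(b − a). -/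
/-- For reals `a < b` and `c ≤ a`:
`∫_a^b √((t - c)/(t - a)) dt ≤ 2 √(b - c) √(b - a)`. -/
theorem integral_sqrt_ratio_le (a b c : ℝ) (hab : a < b) (hca : c ≤ a) :
    ∫ t in a..b, Real.sqrt ((t - c) / (t - a)) ≤
      2 * Real.sqrt (b - c) * Real.sqrt (b - a) := by
  have hbc : (0:ℝ) ≤ b - c := by linarith
  set g : ℝ → ℝ := fun t => Real.sqrt (b - c) * (t - a) ^ (-(1/2) : ℝ) with hgdef
  -- pointwise bound on [a, b]
  have hbound : ∀ t ∈ Set.Icc a b, Real.sqrt ((t - c) / (t - a)) ≤ g t := by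
    intro t ht
    rcases eq_or_lt_of_le ht.1 with h | h
    · simp [g, ← h]
    · have h1 : 0 < t - a := by linarith
      have h2 : (t - c) / (t - a) ≤ (b - c) / (t - a) := by
        gcongr
        exact ht.2
      calc Real.sqrt ((t - c) / (t - a)) ≤ Real.sqrt ((b - c) / (t - a)) :=
            Real.sqrt_le_sqrt h2
        _ = g t := by
            simp only [hgdef]
            rw [Real.sqrt_div hbc,
              show ((t - a):ℝ) ^ (-(1/2):ℝ) = (Real.sqrt (t - a))⁻¹ by
                rw [Real.rpow_neg h1.le, ← Real.sqrt_eq_rpow],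
              div_eq_mul_inv]
  -- integrability of g
  have hg_int : IntervalIntegrable g MeasureTheory.volume a b := by
    have h0 : IntervalIntegrable (fun x : ℝ => x ^ (-(1/2) : ℝ))
        MeasureTheory.volume 0 (b - a) :=
      intervalIntegral.intervalIntegrable_rpow' (by norm_num)
    have h1 := (h0.comp_sub_right a)
    simp only [zero_add, sub_add_cancel] at h1
    exact h1.const_mul _
  -- integrability of f
  have hf_int : IntervalIntegrable (fun t => Real.sqrt ((t - c) / (t - a)))
      MeasureTheory.volume a b := by
    apply hg_int.mono_fun
    · exact (Real.continuous_sqrt.measurable.comp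
        ((measurable_id.sub_const c).div (measurable_id.sub_const a))).aestronglyMeasurable
    · refine MeasureTheory.ae_restrict_of_forall_mem measurableSet_uIoc ?_
      intro t ht
      rw [Set.uIoc_of_le hab.le] at ht
      have h1 : 0 < t - a := by linarith [ht.1]
      simp only [Real.norm_eq_abs]
      rw [abs_of_nonneg (Real.sqrt_nonneg _),
        abs_of_nonneg (by positivity : (0:ℝ) ≤ g t)]
      exact hbound t ⟨ht.1.le, ht.2⟩
  -- integral of g
  have hg_val : ∫ t in a..b, g t = 2 * Real.sqrt (b - c) * Real.sqrt (b - a) := by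
    rw [hgdef]
    rw [intervalIntegral.integral_const_mul]
    have := intervalIntegral.integral_comp_sub_right (a := a) (b := b)
      (fun x : ℝ => x ^ (-(1/2) : ℝ)) a
    rw [this, sub_self, integral_rpow (Or.inl (by norm_num))]
    rw [Real.zero_rpow (by norm_num)]
    rw [show (-(1/2) : ℝ) + 1 = 1/2 by norm_num, Real.sqrt_eq_rpow, Real.sqrt_eq_rpow]
    ring
  calc ∫ t in a..b, Real.sqrt ((t - c) / (t - a)) ≤ ∫ t in a..b, g t :=
        intervalIntegral.integral_mono_on hab.le hf_int hg_int hbound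
    _ = 2 * Real.sqrt (b - c) * Real.sqrt (b - a) := hg_val
end
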